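/- Let X be a Dedekind complete Banach lattice having Fatou norm with constant 𝔣 ≥ 1, let ε ≥ 0, and let T : X → X be a positive bounded linear operator that is ε-band preserving. Then there exists a bounded band preserving operator S : X → X with 0 ≤ S ≤ T (that is, S x ≥ 0 and (T − S) x ≥ 0 for every x ≥ 0) and ‖T − S‖ ≤ 4𝔣ε. -/

import Mathlib

/-- `T` is `ε`-band preserving. -/
def IsEpsBandPreserving {X : Type*} [NormedAddCommGroup X] [Lattice X]
    (ε : ℝ) (T : X → X) : Prop :=
  ∀ x y : X, 0 ≤ y → |x| ⊓ y = 0 → ‖|T x| ⊓ y‖ ≤ ε * ‖x‖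

/-- `S` is band preserving (equivalently, `0`-band preserving). -/
def IsBandPreserving {X : Type*} [NormedAddCommGroup X] [Lattice X] (S : X → X) : Prop :=
  ∀ x y : X, 0 ≤ y → |x| ⊓ y = 0 → |S x| ⊓ y = 0

/-- `X` is Dedekind complete: every nonempty set bounded above has a least upper bound. -/
def DedekindComplete (X : Type*) [Lattice X] : Prop :=
  ∀ S : Set X, S.Nonempty → BddAbove S → ∃ s, IsLUB S s

/-- `X` has Fatou norm with constant `f`: for every upward-directed set of nonnegative
elements with least upper bound `s`, `‖s‖ ≤ f * sup of the norms`. -/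
def FatouNorm (X : Type*) [NormedAddCommGroup X] [Lattice X] (f : ℝ) : Prop :=
  ∀ A : Set X, A.Nonempty → (∀ a ∈ A, 0 ≤ a) → DirectedOn (· ≤ ·) A →
    ∀ s, IsLUB A s → ∀ c : ℝ, (∀ a ∈ A, ‖a‖ ≤ c) → ‖s‖ ≤ f * c

/-!
Fix `z ≥ 0` and a finite partition of the identity into band projections `pᵢ`. The
off-diagonal part `T z - ∑ᵢ pᵢ T pᵢ z = ∑_{i ≠ k} pᵢ T pₖ z` is dominated by an average of the
cuts `p_A T p_{Aᶜ} z` over all sets of indices `A`, because each pair `i ≠ k` is separated by a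
quarter of them; each cut has norm at most `ε ‖z‖` by `ε`-band preservation, so the
off-diagonal part has norm at most `4 ε ‖z‖`. It grows under refinement, so by Dedekind
completeness it has a supremum `R z` over all partitions, which is additive and positively
homogeneous on the positive cone and hence extends to a positive linear `R` with
`‖R‖ ≤ 4 f ε` by the Fatou property. Finally `S = T - R` is dominated by `∑ᵢ pᵢ T pᵢ` for every
partition; the partition `{P_y, 1 - P_y}`, with `P_y` the band projection generated by `y`,
shows that `S` maps elements disjoint from `y` to elements disjoint from `y`.
-/

section LatticeOrderedGroup
variable {α : Type*} [Lattice α] [AddCommGroup α] [IsOrderedAddMonoid α]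

lemma nonneg_of_two_pow_nsmul_nonneg {a : α} (k : ℕ) (h : 0 ≤ 2 ^ k • a) : 0 ≤ a := by
  induction k generalizing a with
  | zero => simpa using h
  | succ k ih => exact nsmul_two_semiclosed (ih (by rwa [← mul_nsmul, ← pow_succ']))

lemma add_inf_le_inf_add_inf {a b c : α} (ha : 0 ≤ a) (hb : 0 ≤ b) (hc : 0 ≤ c) :
    (a + b) ⊓ c ≤ a ⊓ c + b ⊓ c := by
  rw [add_inf, inf_add, inf_add]
  refine le_inf (le_inf inf_le_left ?_) (le_inf ?_ ?_) <;> refine inf_le_right.trans ?_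
  · exact le_add_of_nonneg_right hb
  · exact le_add_of_nonneg_left ha
  · exact le_add_of_nonneg_right hc

lemma add_inf_eq_zero {a b c : α} (ha : 0 ≤ a) (hb : 0 ≤ b) (hc : 0 ≤ c)
    (hac : a ⊓ c = 0) (hbc : b ⊓ c = 0) : (a + b) ⊓ c = 0 :=
  le_antisymm (by simpa [hac, hbc] using add_inf_le_inf_add_inf ha hb hc)
    (le_inf (add_nonneg ha hb) hc)

lemma Finset.sum_inf_eq_zero {ι : Type*} (s : Finset ι) {a : ι → α} {c : α}
    (ha : ∀ i ∈ s, 0 ≤ a i) (hc : 0 ≤ c) (hac : ∀ i ∈ s, a i ⊓ c = 0) :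
    (∑ i ∈ s, a i) ⊓ c = 0 := by
  classical
  induction s using Finset.induction with
  | empty => simpa using inf_eq_left.2 hc
  | insert i s hi ih =>
    simp only [Finset.mem_insert, forall_eq_or_imp] at ha hac
    rw [Finset.sum_insert hi]
    exact add_inf_eq_zero ha.1 (Finset.sum_nonneg ha.2) hc hac.1 (ih ha.2 hac.2)

lemma le_sub_inf_of_inf_nonpos {a s y : α} (has : a ≤ s) (hay : a ⊓ y ≤ 0) :
    a ≤ s - s ⊓ y :=
  calc a ≤ a - a ⊓ y := (le_sub_self_iff a).2 hay
    _ = (a - a) ⊔ (a - y) := by rw [sub_inf]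
    _ ≤ (s - s) ⊔ (s - y) := by simpa using sup_le_sup_left (sub_le_sub_right has y) 0
    _ = s - s ⊓ y := by rw [sub_inf]

lemma IsLUB.inf_eq_zero {A : Set α} {s y : α} (hs : IsLUB A s) (hs0 : 0 ≤ s) (hy : 0 ≤ y)
    (hA : ∀ a ∈ A, a ⊓ y ≤ 0) : s ⊓ y = 0 :=
  le_antisymm ((le_sub_self_iff s).1 <| hs.2 fun a ha =>
    le_sub_inf_of_inf_nonpos (hs.1 ha) (hA a ha)) (le_inf hs0 hy)

end LatticeOrderedGroup

section SolidNorm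
variable {X : Type*} [NormedAddCommGroup X] [Lattice X] [HasSolidNorm X] [IsOrderedAddMonoid X]

open Filter Topology in
/-- Dyadic multiples of `x ≥ 0` are positive since `0 ≤ 2 • a → 0 ≤ a` in a lattice-ordered
group, and the positive cone is closed. -/
instance HasSolidNorm.posSMulMono [NormedSpace ℝ X] : PosSMulMono ℝ X :=
  PosSMulMono.of_smul_nonneg fun c hc x hx => by
    have hdyadic : Tendsto (fun k : ℕ => (⌊c * 2 ^ k⌋₊ / 2 ^ k : ℝ)) atTop (𝓝 c) :=
      (tendsto_nat_floor_mul_div_atTop hc).comp (tendsto_pow_atTop_atTop_of_one_lt one_lt_two)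
    refine isClosed_nonneg.mem_of_tendsto (hdyadic.smul_const x) (Eventually.of_forall fun k => ?_)
    refine nonneg_of_two_pow_nsmul_nonneg k ?_
    rw [← Nat.cast_smul_eq_nsmul ℝ, smul_smul, Nat.cast_pow, Nat.cast_ofNat,
      mul_div_cancel₀ _ (by positivity), Nat.cast_smul_eq_nsmul]
    exact nsmul_nonneg hx _

lemma norm_le_norm_of_nonneg_of_le {a b : X} (ha : 0 ≤ a) (hab : a ≤ b) : ‖a‖ ≤ ‖b‖ :=
  norm_le_norm_of_abs_le_abs (by rwa [abs_of_nonneg ha, abs_of_nonneg (ha.trans hab)])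

end SolidNorm

lemma map_zero_of_map_add_of_nonneg {X Y : Type*} [AddZeroClass X] [Preorder X] [AddCommGroup Y]
    {φ : X → Y} (hadd : ∀ ⦃x y⦄, 0 ≤ x → 0 ≤ y → φ (x + y) = φ x + φ y) : φ 0 = 0 := by
  simpa using hadd le_rfl le_rfl

section ConeExtension
variable {X Y : Type*} [AddCommGroup X] [Lattice X] [IsOrderedAddMonoid X] [AddCommGroup Y]
  {φ : X → Y} (hadd : ∀ ⦃x y⦄, 0 ≤ x → 0 ≤ y → φ (x + y) = φ x + φ y)
include hadd

lemma map_posPart_sub_map_negPart {x a b : X} (ha : 0 ≤ a) (hb : 0 ≤ b) (hx : x = a - b) :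
    φ x⁺ - φ x⁻ = φ a - φ b := by
  have hsplit : x⁺ + b = a + x⁻ := by
    rw [← sub_eq_sub_iff_add_eq_add, posPart_sub_negPart, hx]
  rw [sub_eq_sub_iff_add_eq_add, ← hadd (posPart_nonneg x) hb, ← hadd ha (negPart_nonneg x),
    hsplit]

variable [Module ℝ X] [PosSMulMono ℝ X] [Module ℝ Y]

def LinearMap.ofNonneg (hsmul : ∀ ⦃c : ℝ⦄, 0 < c → ∀ ⦃x⦄, 0 ≤ x → φ (c • x) = c • φ x) :
    X →ₗ[ℝ] Y where
  toFun x := φ x⁺ - φ x⁻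
  map_add' x y := by
    have hxy : x + y = (x⁺ + y⁺) - (x⁻ + y⁻) := by
      rw [add_sub_add_comm, posPart_sub_negPart, posPart_sub_negPart]
    rw [map_posPart_sub_map_negPart hadd (add_nonneg (posPart_nonneg x) (posPart_nonneg y))
      (add_nonneg (negPart_nonneg x) (negPart_nonneg y)) hxy, hadd (posPart_nonneg x)
      (posPart_nonneg y), hadd (negPart_nonneg x) (negPart_nonneg y)]
    abel
  map_smul' c x := by
    rcases lt_trichotomy c 0 with hc | rfl | hc
    · have hc' : 0 < -c := neg_pos.2 hc
      have hcx : c • x = (-c) • x⁻ - (-c) • x⁺ := by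
        rw [← smul_sub, ← neg_sub, posPart_sub_negPart, smul_neg, neg_smul, neg_neg]
      rw [map_posPart_sub_map_negPart hadd (smul_nonneg hc'.le (negPart_nonneg x))
        (smul_nonneg hc'.le (posPart_nonneg x)) hcx, hsmul hc' (negPart_nonneg x),
        hsmul hc' (posPart_nonneg x), RingHom.id_apply, smul_sub, neg_smul, neg_smul]
      abel
    · simp [map_zero_of_map_add_of_nonneg hadd]
    · rw [map_posPart_sub_map_negPart hadd (smul_nonneg hc.le (posPart_nonneg x))
        (smul_nonneg hc.le (negPart_nonneg x)) (by rw [← smul_sub, posPart_sub_negPart]),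
        hsmul hc (posPart_nonneg x), hsmul hc (negPart_nonneg x), RingHom.id_apply, smul_sub]

lemma LinearMap.ofNonneg_apply_of_nonneg
    (hsmul : ∀ ⦃c : ℝ⦄, 0 < c → ∀ ⦃x⦄, 0 ≤ x → φ (c • x) = c • φ x) {x : X} (hx : 0 ≤ x) :
    LinearMap.ofNonneg hadd hsmul x = φ x := by
  simp [LinearMap.ofNonneg, posPart_eq_self.2 hx, negPart_eq_zero.2 hx,
    map_zero_of_map_add_of_nonneg hadd]

end ConeExtension

lemma abs_map_le_map_abs {X Y F : Type*} [AddCommGroup X] [Lattice X] [IsOrderedAddMonoid X]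
    [AddCommGroup Y] [Lattice Y] [IsOrderedAddMonoid Y] [FunLike F X Y] [AddMonoidHomClass F X Y]
    {L : F} (hL : ∀ x, 0 ≤ x → 0 ≤ L x) (x : X) : |L x| ≤ L |x| :=
  calc |L x| = |L x⁺ + -L x⁻| := by rw [← map_neg, ← map_add, ← sub_eq_add_neg, posPart_sub_negPart]
    _ ≤ |L x⁺| + |-L x⁻| := abs_add_le _ _
    _ = L |x| := by
      rw [abs_neg, abs_of_nonneg (hL _ (posPart_nonneg x)), abs_of_nonneg (hL _ (negPart_nonneg x)),
        ← map_add, posPart_add_negPart]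

lemma monotone_of_map_nonneg {X Y F : Type*} [AddCommGroup X] [PartialOrder X]
    [IsOrderedAddMonoid X] [AddCommGroup Y] [PartialOrder Y] [IsOrderedAddMonoid Y] [FunLike F X Y]
    [AddMonoidHomClass F X Y] {L : F} (hL : ∀ x, 0 ≤ x → 0 ≤ L x) : Monotone L :=
  fun _ _ hxy => sub_nonneg.1 (by simpa using hL _ (sub_nonneg.2 hxy))

/-- A least upper bound of `A` if there is one (an arbitrary element otherwise). -/
noncomputable def lub {α : Type*} [Preorder α] [Nonempty α] (A : Set α) : α :=
  Classical.epsilon (IsLUB A)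

lemma DedekindComplete.isLUB_lub {α : Type*} [Lattice α] [Nonempty α] (hDC : DedekindComplete α)
    {A : Set α} (hne : A.Nonempty) (hbdd : BddAbove A) : IsLUB A (lub A) :=
  Classical.epsilon_spec (hDC A hne hbdd)

section BandProjection
variable {X : Type*} [AddCommGroup X] [Lattice X] [Module ℝ X]

structure IsBandProjection (p : X →ₗ[ℝ] X) : Prop where
  nonneg ⦃x : X⦄ : 0 ≤ x → 0 ≤ p x
  le_self ⦃x : X⦄ : 0 ≤ x → p x ≤ x
  inf_sub_eq_zero ⦃x y : X⦄ : 0 ≤ x → 0 ≤ y → p x ⊓ (y - p y) = 0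

namespace IsBandProjection
variable {p q : X →ₗ[ℝ] X}

lemma id : IsBandProjection (LinearMap.id : X →ₗ[ℝ] X) where
  nonneg _ hx := hx
  le_self _ _ := le_rfl
  inf_sub_eq_zero _ _ hx _ := by simpa using inf_eq_right.2 hx

variable [IsOrderedAddMonoid X]

lemma mono (hp : IsBandProjection p) : Monotone p :=
  monotone_of_map_nonneg hp.nonneg

lemma compl (hp : IsBandProjection p) : IsBandProjection (LinearMap.id - p) where
  nonneg x hx := sub_nonneg.2 (hp.le_self hx)
  le_self x hx := sub_le_self x (hp.nonneg hx)
  inf_sub_eq_zero x y hx hy := by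
    simpa [inf_comm] using hp.inf_sub_eq_zero hy hx

lemma comp (hp : IsBandProjection p) (hq : IsBandProjection q) : IsBandProjection (p ∘ₗ q) where
  nonneg x hx := hp.nonneg (hq.nonneg hx)
  le_self x hx := (hp.le_self (hq.nonneg hx)).trans (hq.le_self hx)
  inf_sub_eq_zero x y hx hy := by
    have hpqx : 0 ≤ p (q x) := hp.nonneg (hq.nonneg hx)
    have hy' : 0 ≤ y - q y := sub_nonneg.2 (hq.le_self hy)
    have hqy' : 0 ≤ q y - p (q y) := sub_nonneg.2 (hp.le_self (hq.nonneg hy))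
    have hqx : p (q x) ⊓ (y - q y) = 0 :=
      le_antisymm ((inf_le_inf_right _ (hp.le_self (hq.nonneg hx))).trans_eq
        (hq.inf_sub_eq_zero hx hy)) (le_inf hpqx hy')
    rw [LinearMap.comp_apply, LinearMap.comp_apply,
      show y - p (q y) = (y - q y) + (q y - p (q y)) by abel, inf_comm]
    exact add_inf_eq_zero hy' hqy' hpqx (by rwa [inf_comm])
      (by rw [inf_comm]; exact hp.inf_sub_eq_zero (hq.nonneg hx) (hq.nonneg hy))

end IsBandProjection

end BandProjection

section PrincipalBand
variable {X : Type*} [AddCommGroup X] [Lattice X] [Module ℝ X]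

lemma smul_inf_of_pos [IsOrderedAddMonoid X] [PosSMulMono ℝ X] {c : ℝ} (hc : 0 < c) (a b : X) :
    c • (a ⊓ b) = c • a ⊓ c • b :=
  (OrderIso.smulRight hc).map_inf a b

lemma smul_inf_nonpos [IsOrderedAddMonoid X] [PosSMulMono ℝ X] {e w : X} (he : 0 ≤ e)
    (hw : 0 ≤ w) (hew : e ⊓ w = 0) (t : ℝ) :
    t • e ⊓ w ≤ 0 := by
  have hs : 0 < max t 1 := lt_max_of_lt_right one_pos
  calc t • e ⊓ w ≤ max t 1 • e ⊓ max t 1 • w :=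
        inf_le_inf (smul_le_smul_of_nonneg_right (le_max_left t 1) he)
          (le_smul_of_one_le_left hw (le_max_right t 1))
    _ = 0 := by rw [← smul_inf_of_pos hs, hew, smul_zero]

noncomputable def bandComponent (e x : X) : X :=
  lub (Set.range fun t : ℝ => x ⊓ t • e)

variable (hDC : DedekindComplete X) {e : X}
include hDC

lemma isLUB_bandComponent (e x : X) :
    IsLUB (Set.range fun t : ℝ => x ⊓ t • e) (bandComponent e x) :=
  hDC.isLUB_lub (Set.range_nonempty _) ⟨x, by rintro _ ⟨t, rfl⟩; exact inf_le_left⟩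

lemma bandComponent_le (x : X) : bandComponent e x ≤ x :=
  (isLUB_bandComponent hDC e x).2 (by rintro _ ⟨t, rfl⟩; exact inf_le_left)

lemma bandComponent_nonneg {x : X} (hx : 0 ≤ x) : 0 ≤ bandComponent e x :=
  (isLUB_bandComponent hDC e x).1 ⟨0, by simpa using inf_eq_right.2 hx⟩

lemma inf_sub_bandComponent [IsOrderedAddMonoid X] (he : 0 ≤ e) (y : X) :
    e ⊓ (y - bandComponent e y) = 0 := by
  have hy := isLUB_bandComponent hDC e y
  set w := (y - bandComponent e y) ⊓ e
  have hw : 0 ≤ w := le_inf (sub_nonneg.2 (bandComponent_le hDC y)) he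
  have hshift (t : ℝ) : y ⊓ t • e + w ≤ bandComponent e y := by
    refine le_trans (le_inf ?_ ?_) (hy.1 ⟨t + 1, rfl⟩)
    · calc y ⊓ t • e + w ≤ y ⊓ t • e + (y - y ⊓ t • e) :=
            add_le_add_right (inf_le_left.trans (sub_le_sub_left (hy.1 ⟨t, rfl⟩) y)) _
        _ = y := add_sub_cancel _ _
    · rw [add_smul, one_smul]
      exact add_le_add inf_le_right inf_le_right
  have hle : bandComponent e y ≤ bandComponent e y - w :=
    hy.2 (by rintro _ ⟨t, rfl⟩; exact le_sub_iff_add_le.2 (hshift t))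
  rw [inf_comm]
  exact le_antisymm ((le_sub_self_iff _).1 hle) hw

variable [IsOrderedAddMonoid X] [PosSMulMono ℝ X]

lemma bandComponent_add (he : 0 ≤ e) {x y : X} (hx : 0 ≤ x) (hy : 0 ≤ y) :
    bandComponent e (x + y) = bandComponent e x + bandComponent e y := by
  have hsum := (isLUB_bandComponent hDC e x).add (isLUB_bandComponent hDC e y)
  refine le_antisymm ((isLUB_bandComponent hDC e (x + y)).2 ?_) (hsum.2 ?_)
  · rintro _ ⟨t, rfl⟩
    calc (x + y) ⊓ t • e ≤ (x + y) ⊓ |t| • e :=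
          inf_le_inf_left _ (smul_le_smul_of_nonneg_right (le_abs_self t) he)
      _ ≤ x ⊓ |t| • e + y ⊓ |t| • e := add_inf_le_inf_add_inf hx hy (smul_nonneg (abs_nonneg t) he)
      _ ≤ _ := hsum.1 ⟨_, ⟨|t|, rfl⟩, _, ⟨|t|, rfl⟩, rfl⟩
  · rintro _ ⟨_, ⟨t, rfl⟩, _, ⟨s, rfl⟩, rfl⟩
    refine le_trans ?_ ((isLUB_bandComponent hDC e (x + y)).1 ⟨t + s, rfl⟩)
    exact le_inf (add_le_add inf_le_left inf_le_left)
      ((add_le_add inf_le_right inf_le_right).trans_eq (add_smul t s e).symm)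

lemma bandComponent_smul {c : ℝ} (hc : 0 < c) (x : X) :
    bandComponent e (c • x) = c • bandComponent e x := by
  have hrange : (Set.range fun t : ℝ => (c • x) ⊓ t • e) =
      (c • ·) '' Set.range fun t : ℝ => x ⊓ t • e := by
    rw [← Set.range_comp, ← (mul_left_surjective₀ hc.ne').range_comp]
    congr 1
    ext t
    simp [smul_inf_of_pos hc, smul_smul]
  have h := (isLUB_bandComponent hDC e (c • x))
  rw [hrange] at h
  exact h.unique ((OrderIso.smulRight hc).isLUB_image'.2 (isLUB_bandComponent hDC e x))

lemma bandComponent_inf_eq_zero (he : 0 ≤ e) {x w : X} (hx : 0 ≤ x) (hw : 0 ≤ w)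
    (hew : e ⊓ w = 0) : bandComponent e x ⊓ w = 0 :=
  (isLUB_bandComponent hDC e x).inf_eq_zero (bandComponent_nonneg hDC hx) hw <| by
    rintro _ ⟨t, rfl⟩
    exact (inf_le_inf_right w inf_le_right).trans (smul_inf_nonpos he hw hew t)

noncomputable def bandProj (he : 0 ≤ e) : X →ₗ[ℝ] X :=
  LinearMap.ofNonneg (φ := bandComponent e) (fun _ _ hx hy => bandComponent_add hDC he hx hy)
    (fun _ hc x _ => bandComponent_smul hDC hc x)

lemma bandProj_apply (he : 0 ≤ e) {x : X} (hx : 0 ≤ x) :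
    bandProj hDC he x = bandComponent e x :=
  LinearMap.ofNonneg_apply_of_nonneg _ _ hx

lemma isBandProjection_bandProj (he : 0 ≤ e) : IsBandProjection (bandProj hDC he) where
  nonneg x hx := by rw [bandProj_apply hDC he hx]; exact bandComponent_nonneg hDC hx
  le_self x hx := by rw [bandProj_apply hDC he hx]; exact bandComponent_le hDC x
  inf_sub_eq_zero x y hx hy := by
    rw [bandProj_apply hDC he hx, bandProj_apply hDC he hy]
    exact bandComponent_inf_eq_zero hDC he hx (sub_nonneg.2 (bandComponent_le hDC y))
      (inf_sub_bandComponent hDC he y)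

lemma bandProj_eq_zero (he : 0 ≤ e) {z : X} (hz : 0 ≤ z) (hze : z ⊓ e = 0) :
    bandProj hDC he z = 0 := by
  rw [bandProj_apply hDC he hz, ← inf_eq_left.2 (bandComponent_le hDC z)]
  exact bandComponent_inf_eq_zero hDC he hz hz (by rwa [inf_comm])

end PrincipalBand

lemma two_pow_card_sub_two_le_card_filter {ι : Type*} [Fintype ι] [DecidableEq ι] {i k : ι}
    (hik : i ≠ k) :
    2 ^ (Fintype.card ι - 2) ≤ (Finset.univ.filter fun A : Finset ι => i ∈ A ∧ k ∉ A).card := by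
  have hcard : ((Finset.univ.erase i).erase k).card = Fintype.card ι - 2 := by
    rw [Finset.card_erase_of_mem (by simp [hik.symm]), Finset.card_erase_of_mem (Finset.mem_univ i),
      Finset.card_univ, Nat.sub_sub]
  rw [← hcard, ← Finset.card_powerset]
  refine Finset.card_le_card_of_injOn (insert i) (fun B hB => ?_) fun B₁ hB₁ B₂ hB₂ h => ?_
  · simp only [Finset.coe_powerset, Set.mem_preimage, Set.mem_powerset_iff, Finset.coe_subset] at hB
    have hkB : k ∉ B := fun hk => by simpa using hB hk
    simp [hik.symm, hkB]
  · simp only [Finset.coe_powerset, Set.mem_preimage, Set.mem_powerset_iff,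
      Finset.coe_subset] at hB₁ hB₂
    have hi₁ : i ∉ B₁ := fun hi => by simpa using hB₁ hi
    have hi₂ : i ∉ B₂ := fun hi => by simpa using hB₂ hi
    simpa [Finset.erase_insert hi₁, Finset.erase_insert hi₂] using congr_arg (Finset.erase · i) h

section BandPartition
variable {X : Type*} [AddCommGroup X] [Lattice X] [Module ℝ X]

structure BandPartition (X : Type*) [AddCommGroup X] [Lattice X] [Module ℝ X] where
  ι : Type
  [fintype : Fintype ι]
  proj : ι → X →ₗ[ℝ] X
  isBandProjection (i : ι) : IsBandProjection (proj i)
  sum_proj : ∑ i, proj i = LinearMap.id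

attribute [instance] BandPartition.fintype

namespace BandPartition

instance : Inhabited (BandPartition X) :=
  ⟨{ ι := Unit, proj := fun _ => LinearMap.id, isBandProjection := fun _ => .id,
     sum_proj := by simp }⟩

variable (π σ : BandPartition X)

lemma sum_proj_apply (x : X) : ∑ i, π.proj i x = x := by
  rw [← LinearMap.sum_apply, π.sum_proj, LinearMap.id_apply]

def diag (T : X →ₗ[ℝ] X) : X →ₗ[ℝ] X := ∑ i, π.proj i ∘ₗ T ∘ₗ π.proj i

lemma diag_apply (T : X →ₗ[ℝ] X) (x : X) : π.diag T x = ∑ i, π.proj i (T (π.proj i x)) := by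
  simp [diag]

def sumProj (A : Finset π.ι) : X →ₗ[ℝ] X := ∑ i ∈ A, π.proj i

lemma sumProj_apply (A : Finset π.ι) (x : X) : π.sumProj A x = ∑ i ∈ A, π.proj i x := by
  simp [sumProj]

variable [IsOrderedAddMonoid X]

def pair {p : X →ₗ[ℝ] X} (hp : IsBandProjection p) : BandPartition X where
  ι := Bool
  proj b := if b then p else LinearMap.id - p
  isBandProjection b := by
    cases b
    · exact hp.compl
    · exact hp
  sum_proj := by simp

lemma diag_pair {p : X →ₗ[ℝ] X} (hp : IsBandProjection p) (T : X →ₗ[ℝ] X) {z : X}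
    (hpz : p z = 0) : (pair hp).diag T z = T z - p (T z) := by
  simp [diag_apply, pair, hpz]

def prod : BandPartition X where
  ι := π.ι × σ.ι
  proj ij := π.proj ij.1 ∘ₗ σ.proj ij.2
  isBandProjection ij := (π.isBandProjection ij.1).comp (σ.isBandProjection ij.2)
  sum_proj := by
    ext x
    simp [Fintype.sum_prod_type, ← map_sum, sum_proj_apply]

lemma sumProj_le (A : Finset π.ι) {x : X} (hx : 0 ≤ x) : π.sumProj A x ≤ x := by
  simpa [sumProj_apply, sum_proj_apply] using Finset.sum_le_sum_of_subset_of_nonneg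
    (Finset.subset_univ A) fun i _ _ => (π.isBandProjection i).nonneg hx

lemma isBandProjection_sumProj (A : Finset π.ι) : IsBandProjection (π.sumProj A) where
  nonneg x hx := by
    simpa [sumProj_apply] using Finset.sum_nonneg fun i _ => (π.isBandProjection i).nonneg hx
  le_self _ := π.sumProj_le A
  inf_sub_eq_zero x y hx hy := by
    have hpy (i : π.ι) (hi : i ∈ A) : π.proj i y ≤ π.sumProj A y := by
      rw [sumProj_apply]
      exact Finset.single_le_sum (fun j _ => (π.isBandProjection j).nonneg hy) hi
    rw [sumProj_apply π A x]
    refine Finset.sum_inf_eq_zero A (fun i _ => (π.isBandProjection i).nonneg hx)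
      (sub_nonneg.2 (π.sumProj_le A hy)) fun i hi => le_antisymm ?_
        (le_inf ((π.isBandProjection i).nonneg hx) (sub_nonneg.2 (π.sumProj_le A hy)))
    calc π.proj i x ⊓ (y - π.sumProj A y) ≤ π.proj i x ⊓ (y - π.proj i y) :=
          inf_le_inf_left _ (sub_le_sub_left (hpy i hi) y)
      _ = 0 := (π.isBandProjection i).inf_sub_eq_zero hx hy

variable {π σ} {T : X →ₗ[ℝ] X} (hT : ∀ x, 0 ≤ x → 0 ≤ T x)
include hT

lemma diag_nonneg {x : X} (hx : 0 ≤ x) : 0 ≤ π.diag T x := by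
  rw [diag_apply]
  exact Finset.sum_nonneg fun i _ =>
    (π.isBandProjection i).nonneg (hT _ ((π.isBandProjection i).nonneg hx))

lemma diag_le {x : X} (hx : 0 ≤ x) : π.diag T x ≤ T x :=
  calc π.diag T x ≤ ∑ i, π.proj i (T x) := by
        rw [diag_apply]
        gcongr with i
        exact (π.isBandProjection i).mono (monotone_of_map_nonneg hT
          ((π.isBandProjection i).le_self hx))
    _ = T x := π.sum_proj_apply (T x)

lemma diag_prod_le_left {x : X} (hx : 0 ≤ x) : (π.prod σ).diag T x ≤ π.diag T x :=
  calc (π.prod σ).diag T x = ∑ i, ∑ j, π.proj i (σ.proj j (T (π.proj i (σ.proj j x)))) := by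
        simp [diag_apply, prod, Fintype.sum_prod_type]
    _ ≤ ∑ i, ∑ j, π.proj i (σ.proj j (T (π.proj i x))) := by
        gcongr with i _ j
        exact ((π.isBandProjection i).comp (σ.isBandProjection j)).mono (monotone_of_map_nonneg hT
          ((π.isBandProjection i).mono ((σ.isBandProjection j).le_self hx)))
    _ = π.diag T x := by simp [diag_apply, ← map_sum, sum_proj_apply]

lemma diag_prod_le_right {x : X} (hx : 0 ≤ x) : (π.prod σ).diag T x ≤ σ.diag T x :=
  calc (π.prod σ).diag T x = ∑ j, ∑ i, π.proj i (σ.proj j (T (π.proj i (σ.proj j x)))) := by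
        simp [diag_apply, prod, Fintype.sum_prod_type, Finset.sum_comm (γ := π.ι)]
    _ ≤ ∑ j, ∑ i, π.proj i (σ.proj j (T (σ.proj j x))) := by
        gcongr with j _ i
        exact ((π.isBandProjection i).comp (σ.isBandProjection j)).mono (monotone_of_map_nonneg hT
          ((π.isBandProjection i).le_self ((σ.isBandProjection j).nonneg hx)))
    _ = σ.diag T x := by simp [diag_apply, sum_proj_apply]

/-- Averaging the cuts `(A, Aᶜ)` over all `A` counts every off-diagonal block `pᵢ T pₖ`
at least `2 ^ (n - 2)` times. -/
lemma two_pow_nsmul_sub_diag_le {z : X} (hz : 0 ≤ z) :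
    2 ^ (Fintype.card π.ι - 2) • (T z - π.diag T z) ≤
      ∑ A : Finset π.ι, π.sumProj A (T (z - π.sumProj A z)) := by
  classical
  set t : π.ι → π.ι → X := fun i k => π.proj i (T (π.proj k z))
  have ht (i k : π.ι) : 0 ≤ t i k :=
    (π.isBandProjection i).nonneg (hT _ ((π.isBandProjection k).nonneg hz))
  have hoff : T z - π.diag T z = ∑ i, ∑ k ∈ Finset.univ.erase i, t i k := by
    have hTz : T z = ∑ i, ∑ k, t i k := by simp [t, ← map_sum, sum_proj_apply]
    rw [hTz, diag_apply, ← Finset.sum_sub_distrib]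
    refine Finset.sum_congr rfl fun i _ => ?_
    rw [← Finset.add_sum_erase _ _ (Finset.mem_univ i), add_sub_cancel_left]
  have hcut (A : Finset π.ι) : π.sumProj A (T (z - π.sumProj A z)) =
      ∑ i, ∑ k, if i ∈ A ∧ k ∉ A then t i k else 0 := by
    have hcompl : z - π.sumProj A z = ∑ k, if k ∉ A then π.proj k z else 0 := by
      rw [sumProj_apply, sub_eq_iff_eq_add', ← Finset.sum_filter, Finset.filter_notMem_eq_sdiff,
        ← Finset.compl_eq_univ_sdiff, Finset.sum_add_sum_compl, sum_proj_apply]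
    rw [hcompl, sumProj_apply]
    simp [t, ite_and, Finset.sum_ite_irrel, map_sum, Finset.sum_ite_mem, apply_ite]
  calc 2 ^ (Fintype.card π.ι - 2) • (T z - π.diag T z)
      = ∑ i, ∑ k ∈ Finset.univ.erase i, 2 ^ (Fintype.card π.ι - 2) • t i k := by
        simp only [hoff, Finset.smul_sum]
    _ ≤ ∑ i, ∑ k ∈ Finset.univ.erase i,
          (Finset.univ.filter fun A : Finset π.ι => i ∈ A ∧ k ∉ A).card • t i k := by
        refine Finset.sum_le_sum fun i _ => Finset.sum_le_sum fun k hk => ?_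
        exact nsmul_le_nsmul_left (ht i k)
          (two_pow_card_sub_two_le_card_filter (Finset.ne_of_mem_erase hk).symm)
    _ ≤ ∑ i, ∑ k, (Finset.univ.filter fun A : Finset π.ι => i ∈ A ∧ k ∉ A).card • t i k := by
        gcongr with i
        · exact fun k _ _ => nsmul_nonneg (ht i k) _
        · exact Finset.erase_subset i _
    _ = ∑ A : Finset π.ι, π.sumProj A (T (z - π.sumProj A z)) := by
        simp only [hcut, ← Finset.sum_const, Finset.sum_filter]
        exact (Finset.sum_congr rfl fun i _ => Finset.sum_comm).trans Finset.sum_comm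

end BandPartition
end BandPartition

section ErrorBound
variable {X : Type*} [NormedAddCommGroup X] [Lattice X] [HasSolidNorm X] [IsOrderedAddMonoid X]
  [NormedSpace ℝ X] {T : X →ₗ[ℝ] X} {ε : ℝ}

lemma IsBandProjection.norm_map_sub_le {p : X →ₗ[ℝ] X} (hp : IsBandProjection p) (hε : 0 ≤ ε)
    (hTε : IsEpsBandPreserving ε T) (hT : ∀ x, 0 ≤ x → 0 ≤ T x) {z : X} (hz : 0 ≤ z) :
    ‖p (T (z - p z))‖ ≤ ε * ‖z‖ := by
  have hu : 0 ≤ z - p z := sub_nonneg.2 (hp.le_self hz)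
  have hTu : 0 ≤ T (z - p z) := hT _ hu
  have h := hTε (z - p z) (p (T (z - p z))) (hp.nonneg hTu) (by
    rw [abs_of_nonneg hu, inf_comm]
    exact hp.inf_sub_eq_zero hTu hz)
  rw [abs_of_nonneg hTu, inf_eq_right.2 (hp.le_self hTu)] at h
  exact h.trans (mul_le_mul_of_nonneg_left
    (norm_le_norm_of_nonneg_of_le hu (sub_le_self z (hp.nonneg hz))) hε)

lemma BandPartition.norm_sub_diag_le (π : BandPartition X) (hε : 0 ≤ ε)
    (hTε : IsEpsBandPreserving ε T) (hT : ∀ x, 0 ≤ x → 0 ≤ T x) {z : X} (hz : 0 ≤ z) :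
    ‖T z - π.diag T z‖ ≤ 4 * ε * ‖z‖ := by
  classical
  set n := Fintype.card π.ι
  have hpow : (2 : ℝ) ^ n ≤ 4 * 2 ^ (n - 2) := by
    calc (2 : ℝ) ^ n ≤ 2 ^ (n - 2 + 2) := pow_le_pow_right₀ one_le_two (by omega)
      _ = 4 * 2 ^ (n - 2) := by rw [pow_add]; ring
  have hsum : (2 : ℝ) ^ (n - 2) * ‖T z - π.diag T z‖ ≤ 2 ^ n * (ε * ‖z‖) :=
    calc (2 : ℝ) ^ (n - 2) * ‖T z - π.diag T z‖ = ‖2 ^ (n - 2) • (T z - π.diag T z)‖ := by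
          rw [← Nat.cast_smul_eq_nsmul ℝ, norm_smul]; simp
      _ ≤ ‖∑ A : Finset π.ι, π.sumProj A (T (z - π.sumProj A z))‖ :=
          norm_le_norm_of_nonneg_of_le (nsmul_nonneg (sub_nonneg.2 (π.diag_le hT hz)) _)
            (π.two_pow_nsmul_sub_diag_le hT hz)
      _ ≤ ∑ A : Finset π.ι, ε * ‖z‖ := (norm_sum_le _ _).trans <| Finset.sum_le_sum fun A _ =>
          (π.isBandProjection_sumProj A).norm_map_sub_le hε hTε hT hz
      _ = 2 ^ n * (ε * ‖z‖) := by simp [Fintype.card_finset, n]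
  refine le_of_mul_le_mul_left (hsum.trans ?_) (by positivity : (0 : ℝ) < 2 ^ (n - 2))
  calc (2 : ℝ) ^ n * (ε * ‖z‖) ≤ 4 * 2 ^ (n - 2) * (ε * ‖z‖) :=
        mul_le_mul_of_nonneg_right hpow (by positivity)
    _ = 2 ^ (n - 2) * (4 * ε * ‖z‖) := by ring

end ErrorBound

section OffDiagonal
variable {X : Type*} [AddCommGroup X] [Lattice X] [IsOrderedAddMonoid X] [Module ℝ X]

noncomputable def offDiagSup (T : X →ₗ[ℝ] X) (x : X) : X :=
  lub (Set.range fun π : BandPartition X => T x - π.diag T x)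

variable (hDC : DedekindComplete X) {T : X →ₗ[ℝ] X} (hT : ∀ x, 0 ≤ x → 0 ≤ T x)
include hDC hT

lemma isLUB_offDiagSup {x : X} (hx : 0 ≤ x) :
    IsLUB (Set.range fun π : BandPartition X => T x - π.diag T x) (offDiagSup T x) :=
  hDC.isLUB_lub (Set.range_nonempty _)
    ⟨T x, by rintro _ ⟨π, rfl⟩; exact sub_le_self _ (π.diag_nonneg hT hx)⟩

lemma sub_offDiagSup_le_diag {x : X} (hx : 0 ≤ x) (π : BandPartition X) :
    T x - offDiagSup T x ≤ π.diag T x :=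
  sub_le_comm.1 ((isLUB_offDiagSup hDC hT hx).1 ⟨π, rfl⟩)

lemma offDiagSup_nonneg {x : X} (hx : 0 ≤ x) : 0 ≤ offDiagSup T x :=
  (sub_nonneg.2 ((default : BandPartition X).diag_le hT hx)).trans
    ((isLUB_offDiagSup hDC hT hx).1 ⟨default, rfl⟩)

lemma offDiagSup_le {x : X} (hx : 0 ≤ x) : offDiagSup T x ≤ T x :=
  (isLUB_offDiagSup hDC hT hx).2 (by rintro _ ⟨π, rfl⟩; exact sub_le_self _ (π.diag_nonneg hT hx))

lemma offDiagSup_add {x y : X} (hx : 0 ≤ x) (hy : 0 ≤ y) :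
    offDiagSup T (x + y) = offDiagSup T x + offDiagSup T y := by
  have hsum := (isLUB_offDiagSup hDC hT hx).add (isLUB_offDiagSup hDC hT hy)
  have hsplit (π : BandPartition X) :
      T (x + y) - π.diag T (x + y) = (T x - π.diag T x) + (T y - π.diag T y) := by
    simp only [map_add]; abel
  refine le_antisymm ((isLUB_offDiagSup hDC hT (add_nonneg hx hy)).2 ?_) (hsum.2 ?_)
  · rintro _ ⟨π, rfl⟩
    exact (hsplit π).trans_le (hsum.1 ⟨_, ⟨π, rfl⟩, _, ⟨π, rfl⟩, rfl⟩)
  · -- `π.prod σ` refines both partitions, and refining enlarges the off-diagonal part.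
    rintro _ ⟨_, ⟨π, rfl⟩, _, ⟨σ, rfl⟩, rfl⟩
    calc (T x - π.diag T x) + (T y - σ.diag T y)
        ≤ (T x - (π.prod σ).diag T x) + (T y - (π.prod σ).diag T y) :=
          add_le_add (sub_le_sub_left (π.diag_prod_le_left hT hx) _)
            (sub_le_sub_left (π.diag_prod_le_right hT hy) _)
      _ ≤ offDiagSup T (x + y) :=
          (hsplit _).symm.trans_le ((isLUB_offDiagSup hDC hT (add_nonneg hx hy)).1 ⟨_, rfl⟩)

lemma offDiagSup_smul [PosSMulMono ℝ X] {c : ℝ} (hc : 0 < c) {x : X} (hx : 0 ≤ x) :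
    offDiagSup T (c • x) = c • offDiagSup T x := by
  have h := isLUB_offDiagSup hDC hT (smul_nonneg hc.le hx)
  have hrange : (Set.range fun π : BandPartition X => T (c • x) - π.diag T (c • x)) =
      (c • ·) '' Set.range fun π : BandPartition X => T x - π.diag T x := by
    rw [← Set.range_comp]
    congr 1
    ext π
    simp [smul_sub]
  rw [hrange] at h
  exact h.unique ((OrderIso.smulRight hc).isLUB_image'.2 (isLUB_offDiagSup hDC hT hx))

noncomputable def offDiagPart [PosSMulMono ℝ X] : X →ₗ[ℝ] X :=
  LinearMap.ofNonneg (φ := offDiagSup T) (fun _ _ hx hy => offDiagSup_add hDC hT hx hy)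
    (fun _ hc _ hx => offDiagSup_smul hDC hT hc hx)

lemma offDiagPart_apply [PosSMulMono ℝ X] {x : X} (hx : 0 ≤ x) :
    offDiagPart hDC hT x = offDiagSup T x :=
  LinearMap.ofNonneg_apply_of_nonneg _ _ hx

lemma offDiagPart_nonneg [PosSMulMono ℝ X] {x : X} (hx : 0 ≤ x) : 0 ≤ offDiagPart hDC hT x :=
  (offDiagPart_apply hDC hT hx).symm ▸ offDiagSup_nonneg hDC hT hx

lemma offDiagPart_le [PosSMulMono ℝ X] {x : X} (hx : 0 ≤ x) : offDiagPart hDC hT x ≤ T x :=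
  (offDiagPart_apply hDC hT hx).symm ▸ offDiagSup_le hDC hT hx

end OffDiagonal

section Approximation
variable {X : Type*} [NormedAddCommGroup X] [Lattice X] [HasSolidNorm X] [IsOrderedAddMonoid X]
  [NormedSpace ℝ X] (hDC : DedekindComplete X) {T : X →ₗ[ℝ] X} (hT : ∀ x, 0 ≤ x → 0 ≤ T x)
include hDC hT

lemma isBandPreserving_sub_offDiagPart : IsBandPreserving ⇑(T - offDiagPart hDC hT) := by
  intro x y hy hxy
  have hTx : 0 ≤ T |x| := hT _ (abs_nonneg x)
  have hP := isBandProjection_bandProj hDC hy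
  have hdiag : (BandPartition.pair hP).diag T |x| = T |x| - bandComponent y (T |x|) := by
    rw [BandPartition.diag_pair hP T (bandProj_eq_zero hDC hy (abs_nonneg x) hxy),
      bandProj_apply hDC hy hTx]
  have hle : |(T - offDiagPart hDC hT) x| ≤ T |x| - bandComponent y (T |x|) := by
    refine (abs_map_le_map_abs (fun z hz => sub_nonneg.2 (offDiagPart_le hDC hT hz)) x).trans ?_
    rw [LinearMap.sub_apply, offDiagPart_apply hDC hT (abs_nonneg x), ← hdiag]
    exact sub_offDiagSup_le_diag hDC hT (abs_nonneg x) _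
  refine le_antisymm ?_ (le_inf (abs_nonneg _) hy)
  calc |(T - offDiagPart hDC hT) x| ⊓ y ≤ (T |x| - bandComponent y (T |x|)) ⊓ y :=
        inf_le_inf_right y hle
    _ = 0 := by rw [inf_comm]; exact inf_sub_bandComponent hDC hy _

lemma norm_offDiagPart_le {f ε : ℝ} (hFatou : FatouNorm X f) (hε : 0 ≤ ε)
    (hTε : IsEpsBandPreserving ε T) (x : X) :
    ‖offDiagPart hDC hT x‖ ≤ 4 * f * ε * ‖x‖ := by
  have hx := abs_nonneg x
  have hsup : ‖offDiagSup T |x|‖ ≤ f * (4 * ε * ‖|x|‖) :=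
    hFatou _ (Set.range_nonempty _)
      (by rintro _ ⟨π, rfl⟩; exact sub_nonneg.2 (π.diag_le hT hx))
      (directedOn_range.2 fun π σ => ⟨π.prod σ, sub_le_sub_left (π.diag_prod_le_left hT hx) _,
        sub_le_sub_left (π.diag_prod_le_right hT hx) _⟩)
      _ (isLUB_offDiagSup hDC hT hx) _
      (by rintro _ ⟨π, rfl⟩; exact π.norm_sub_diag_le hε hTε hT hx)
  have hpos (z : X) (hz : 0 ≤ z) : 0 ≤ offDiagPart hDC hT z := offDiagPart_nonneg hDC hT hz
  calc ‖offDiagPart hDC hT x‖ ≤ ‖offDiagPart hDC hT |x|‖ :=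
        norm_le_norm_of_abs_le_abs ((abs_map_le_map_abs hpos x).trans_eq
          (abs_of_nonneg (hpos _ hx)).symm)
    _ ≤ 4 * f * ε * ‖x‖ := by
        rw [offDiagPart_apply hDC hT hx]
        exact hsup.trans_eq (by rw [norm_abs_eq_norm]; ring)

end Approximation

theorem positive_epsBP_approx_by_BP_general {X : Type*} [NormedAddCommGroup X] [Lattice X]
    [HasSolidNorm X] [IsOrderedAddMonoid X]
    [NormedSpace ℝ X] (hDC : DedekindComplete X)
    (f : ℝ) (hf : 1 ≤ f) (hFatou : FatouNorm X f)
    (ε : ℝ) (hε : 0 ≤ ε) (T : X →L[ℝ] X) (hTpos : ∀ x : X, 0 ≤ x → 0 ≤ T x)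
    (hT : IsEpsBandPreserving ε ⇑T) :
    ∃ S : X →L[ℝ] X, IsBandPreserving ⇑S ∧
      (∀ x : X, 0 ≤ x → 0 ≤ S x ∧ S x ≤ T x) ∧ ‖T - S‖ ≤ 4 * f * ε := by
  set V := offDiagPart hDC (T := T) hTpos
  have hV : ∀ x, ‖V x‖ ≤ 4 * f * ε * ‖x‖ := norm_offDiagPart_le hDC hTpos hFatou hε hT
  refine ⟨T - V.mkContinuous _ hV, isBandPreserving_sub_offDiagPart hDC hTpos,
    fun x hx => ⟨sub_nonneg.2 (offDiagPart_le hDC hTpos hx),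
      sub_le_self _ (offDiagPart_nonneg hDC hTpos hx)⟩, ?_⟩
  rw [sub_sub_cancel]
  exact V.mkContinuous_norm_le (by positivity) hV

/-- On a Dedekind complete Banach lattice with Fatou norm (constant `f`), every positive
`ε`-band preserving bounded operator `T` admits a band preserving operator `S` with
`0 ≤ S ≤ T` and `‖T − S‖ ≤ 4 f ε`. -/
theorem positive_epsBP_approx_by_BP {X : Type*} [NormedAddCommGroup X] [Lattice X]
    [HasSolidNorm X] [IsOrderedAddMonoid X]
    [NormedSpace ℝ X] [CompleteSpace X] (hDC : DedekindComplete X)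
    (f : ℝ) (hf : 1 ≤ f) (hFatou : FatouNorm X f)
    (ε : ℝ) (hε : 0 ≤ ε) (T : X →L[ℝ] X) (hTpos : ∀ x : X, 0 ≤ x → 0 ≤ T x)
    (hT : IsEpsBandPreserving ε ⇑T) :
    ∃ S : X →L[ℝ] X, IsBandPreserving ⇑S ∧
      (∀ x : X, 0 ≤ x → 0 ≤ S x ∧ S x ≤ T x) ∧ ‖T - S‖ ≤ 4 * f * ε :=
  positive_epsBP_approx_by_BP_general hDC f hf hFatou ε hε T hTpos hT
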